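/- arXiv:1710.00360 — 2 statements merged into one kernel-verified Lean document; each statement's English description precedes it below -/
import Mathlib

section
/- Let p be an odd prime and A a symmetric 2×2 matrix over ℤ whose reduction A_p mod p has rank r ∈ {0,1,2}. Let B ∈ ℤ². Then |p^{-2} Σ_{x ∈ (ℤ/pℤ)²} e^{2πi(ᵗx A x + 2·ᵗB x)/p}| ≤ p^{-r/2}. -/
open Complex

set_option linter.unusedSectionVars false

private lemma psi_abs {p : ℕ} [NeZero p] (x : ZMod p) :
    ‖ZMod.stdAddChar x‖ = 1 := by
  rw [ZMod.stdAddChar_apply]; exact Circle.norm_coe _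

private lemma psi_conj {p : ℕ} [NeZero p] (x : ZMod p) :
    (starRingEnd ℂ) (ZMod.stdAddChar x) = ZMod.stdAddChar (-x) := by
  have h0 : ZMod.stdAddChar x ≠ 0 := by
    intro h; have := psi_abs x; rw [h] at this; simp at this
  have h1 : ZMod.stdAddChar x * ZMod.stdAddChar (-x) = 1 := by
    rw [← AddChar.map_add_eq_mul, add_neg_cancel, AddChar.map_zero_eq_one]
  have h2 : ZMod.stdAddChar x * (starRingEnd ℂ) (ZMod.stdAddChar x) = 1 := by
    rw [Complex.mul_conj, ← Complex.sq_norm, psi_abs]; norm_num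
  exact mul_left_cancel₀ h0 (h2.trans h1.symm)

private def Qp (p : ℕ) (A : Matrix (Fin 2) (Fin 2) ℤ) (B : Fin 2 → ℤ) (x y : ZMod p) : ZMod p :=
  (A 0 0 : ZMod p) * x ^ 2 + ((A 0 1 : ZMod p) + (A 1 0 : ZMod p)) * x * y +
    (A 1 1 : ZMod p) * y ^ 2 + 2 * ((B 0 : ZMod p) * x + (B 1 : ZMod p) * y)

private noncomputable def Sp (p : ℕ) [NeZero p] (A : Matrix (Fin 2) (Fin 2) ℤ) (B : Fin 2 → ℤ) : ℂ :=
  ∑ z : ZMod p × ZMod p, ZMod.stdAddChar (Qp p A B z.1 z.2)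

section step2

variable (p : ℕ) [NeZero p] [Fact p.Prime] (A : Matrix (Fin 2) (Fin 2) ℤ) (B : Fin 2 → ℤ)

private def L0 (h : ZMod p × ZMod p) : ZMod p :=
  2 * (A 0 0 : ZMod p) * h.1 + ((A 0 1 : ZMod p) + (A 1 0 : ZMod p)) * h.2

private def L1 (h : ZMod p × ZMod p) : ZMod p :=
  ((A 0 1 : ZMod p) + (A 1 0 : ZMod p)) * h.1 + 2 * (A 1 1 : ZMod p) * h.2

private lemma ring_id (h w : ZMod p × ZMod p) :
    Qp p A B (w.1 + h.1) (w.2 + h.2) - Qp p A B w.1 w.2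
      = Qp p A B h.1 h.2 + (L0 p A h * w.1 + L1 p A h * w.2) := by
  simp only [Qp, L0, L1]; ring

set_option maxHeartbeats 1000000 in
private lemma key_identity :
    Sp p A B * (starRingEnd ℂ) (Sp p A B) =
      ∑ h : ZMod p × ZMod p, ZMod.stdAddChar (Qp p A B h.1 h.2) *
        ((if L0 p A h = 0 then (p : ℂ) else 0) * (if L1 p A h = 0 then (p : ℂ) else 0)) := by
  have prim := ZMod.isPrimitive_stdAddChar p
  calc Sp p A B * (starRingEnd ℂ) (Sp p A B)
      = ∑ z : ZMod p × ZMod p, ∑ w : ZMod p × ZMod p,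
          ZMod.stdAddChar (Qp p A B z.1 z.2) *
            ZMod.stdAddChar (-(Qp p A B w.1 w.2)) := by
        rw [Sp, map_sum, Finset.sum_mul_sum]
        exact Finset.sum_congr rfl fun z _ => Finset.sum_congr rfl fun w _ => by
          rw [psi_conj]
  _ = ∑ w : ZMod p × ZMod p, ∑ z : ZMod p × ZMod p,
          ZMod.stdAddChar (Qp p A B z.1 z.2 - Qp p A B w.1 w.2) := by
        rw [Finset.sum_comm]
        exact Finset.sum_congr rfl fun w _ => Finset.sum_congr rfl fun z _ => by
          rw [sub_eq_add_neg, AddChar.map_add_eq_mul]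
  _ = ∑ w : ZMod p × ZMod p, ∑ h : ZMod p × ZMod p,
          ZMod.stdAddChar (Qp p A B (w + h).1 (w + h).2 - Qp p A B w.1 w.2) := by
        refine Finset.sum_congr rfl fun w _ => ?_
        exact (Fintype.sum_equiv (Equiv.addLeft w)
          (fun h => ZMod.stdAddChar (Qp p A B (w + h).1 (w + h).2 - Qp p A B w.1 w.2))
          (fun z => ZMod.stdAddChar (Qp p A B z.1 z.2 - Qp p A B w.1 w.2))
          (fun h => by rw [Equiv.coe_addLeft])).symm
  _ = ∑ w : ZMod p × ZMod p, ∑ h : ZMod p × ZMod p,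
          ZMod.stdAddChar (Qp p A B h.1 h.2 + (L0 p A h * w.1 + L1 p A h * w.2)) := by
        refine Finset.sum_congr rfl fun w _ => Finset.sum_congr rfl fun h _ => ?_
        rw [Prod.fst_add, Prod.snd_add, ring_id]
  _ = ∑ h : ZMod p × ZMod p, ZMod.stdAddChar (Qp p A B h.1 h.2) *
        ((if L0 p A h = 0 then (p : ℂ) else 0) * (if L1 p A h = 0 then (p : ℂ) else 0)) := by
        rw [Finset.sum_comm]
        refine Finset.sum_congr rfl fun h _ => ?_
        have : ∀ w : ZMod p × ZMod p,
            ZMod.stdAddChar (Qp p A B h.1 h.2 + (L0 p A h * w.1 + L1 p A h * w.2)) =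
            ZMod.stdAddChar (Qp p A B h.1 h.2) *
              (ZMod.stdAddChar (w.1 * L0 p A h) * ZMod.stdAddChar (w.2 * L1 p A h)) := by
          intro w
          rw [AddChar.map_add_eq_mul, AddChar.map_add_eq_mul, mul_comm (L0 p A h),
            mul_comm (L1 p A h)]
        rw [Finset.sum_congr rfl fun w _ => this w, ← Finset.mul_sum]
        congr 1
        rw [Fintype.sum_prod_type]
        dsimp only
        rw [← Finset.sum_mul_sum,
          AddChar.sum_mulShift _ prim, AddChar.sum_mulShift _ prim, ZMod.card]
        split_ifs <;> simp


private lemma two_ne_zero_zmod (hodd : p ≠ 2) : (2 : ZMod p) ≠ 0 := by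
  have : ((2 : ℕ) : ZMod p) ≠ 0 := by
    rw [Ne, ZMod.natCast_eq_zero_iff]
    intro hdvd
    exact hodd ((Nat.prime_dvd_prime_iff_eq (Fact.out) Nat.prime_two).1 hdvd)
  exact_mod_cast this

private lemma mem_ker_iff (hA : A.IsSymm) (hodd : p ≠ 2) (a b : ZMod p) :
    (L0 p A (a, b) = 0 ∧ L1 p A (a, b) = 0) ↔
      (A.map (Int.cast : ℤ → ZMod p)).mulVecLin ![a, b] = 0 := by
  have h2 := two_ne_zero_zmod p hodd
  have hsym : ((A 1 0 : ℤ) : ZMod p) = ((A 0 1 : ℤ) : ZMod p) := by rw [hA.apply]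
  have hL0 : L0 p A (a, b) = 2 * ((A 0 0 : ZMod p) * a + (A 0 1 : ZMod p) * b) := by
    simp only [L0, hsym]; ring
  have hL1 : L1 p A (a, b) = 2 * ((A 1 0 : ZMod p) * a + (A 1 1 : ZMod p) * b) := by
    simp only [L1, hsym]; ring
  rw [Matrix.mulVecLin_apply, funext_iff]
  rw [hL0, hL1, mul_eq_zero, mul_eq_zero]
  simp only [h2, false_or]
  constructor
  · rintro ⟨e0, e1⟩ i
    fin_cases i <;>
      simp [Matrix.mulVec, dotProduct, Fin.sum_univ_two, Matrix.map_apply, e0, e1]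
  · intro hall
    have e0 := hall 0
    have e1 := hall 1
    simp [Matrix.mulVec, dotProduct, Fin.sum_univ_two, Matrix.map_apply] at e0 e1
    exact ⟨by rw [← e0], by rw [← e1]⟩

private lemma card_eq (hA : A.IsSymm) (hodd : p ≠ 2) :
    (Finset.univ.filter (fun h : ZMod p × ZMod p => L0 p A h = 0 ∧ L1 p A h = 0)).card =
      Nat.card (LinearMap.ker (A.map (Int.cast : ℤ → ZMod p)).mulVecLin) := by
  classical
  rw [← Fintype.card_subtype, ← Nat.card_eq_fintype_card]
  refine Nat.card_congr ?_
  refine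
    { toFun := fun x => ⟨![x.1.1, x.1.2], ?_⟩
      invFun := fun v => ⟨(v.1 0, v.1 1), ?_⟩
      left_inv := ?_
      right_inv := ?_ }
  · rw [LinearMap.mem_ker]
    exact (mem_ker_iff p A hA hodd x.1.1 x.1.2).1 x.2
  · have hv := v.2
    rw [LinearMap.mem_ker] at hv
    have : (A.map (Int.cast : ℤ → ZMod p)).mulVecLin ![v.1 0, v.1 1] = 0 := by
      convert hv using 2
      funext i; fin_cases i <;> simp
    exact (mem_ker_iff p A hA hodd (v.1 0) (v.1 1)).2 this
  · rintro ⟨⟨a, b⟩, h⟩; simp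
  · rintro ⟨v, hv⟩
    ext i
    fin_cases i <;> simp


private lemma step2 (hA : A.IsSymm) (hodd : p ≠ 2) :
    ‖Sp p A B‖ ^ 2 ≤
      (p : ℝ) ^ 2 *
        Nat.card (LinearMap.ker (A.map (Int.cast : ℤ → ZMod p)).mulVecLin) := by
  classical
  have h1 : ‖Sp p A B‖ ^ 2
      = ‖Sp p A B * (starRingEnd ℂ) (Sp p A B)‖ := by
    rw [norm_mul, Complex.norm_conj, sq]
  rw [h1, key_identity]
  calc ‖∑ h : ZMod p × ZMod p, ZMod.stdAddChar (Qp p A B h.1 h.2) *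
        ((if L0 p A h = 0 then (p : ℂ) else 0) * (if L1 p A h = 0 then (p : ℂ) else 0))‖
      ≤ ∑ h : ZMod p × ZMod p, ‖ZMod.stdAddChar (Qp p A B h.1 h.2) *
        ((if L0 p A h = 0 then (p : ℂ) else 0) * (if L1 p A h = 0 then (p : ℂ) else 0))‖ :=
        norm_sum_le _ _
  _ = ∑ h : ZMod p × ZMod p,
        (if L0 p A h = 0 ∧ L1 p A h = 0 then (p : ℝ) ^ 2 else 0) := by
        refine Finset.sum_congr rfl fun h _ => ?_
        rw [norm_mul, psi_abs, one_mul, norm_mul]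
        split_ifs with h0 h1 h1 <;>
          simp_all [Complex.norm_natCast, sq]
  _ = ((Finset.univ.filter
        (fun h : ZMod p × ZMod p => L0 p A h = 0 ∧ L1 p A h = 0)).card : ℝ) * (p : ℝ) ^ 2 := by
        rw [← Finset.sum_filter, Finset.sum_const, nsmul_eq_mul]
  _ = (p : ℝ) ^ 2 *
        Nat.card (LinearMap.ker (A.map (Int.cast : ℤ → ZMod p)).mulVecLin) := by
        rw [card_eq p A hA hodd, mul_comm]

end step2

private lemma sum_range_castZMod {p : ℕ} [NeZero p] (g : ZMod p → ℂ) :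
    ∑ i ∈ Finset.range p, g (i : ZMod p) = ∑ z : ZMod p, g z := by
  refine Finset.sum_nbij' (fun i => (i : ZMod p)) (fun z => z.val) ?_ ?_ ?_ ?_ ?_
  · intro a _; exact Finset.mem_univ _
  · intro z _; exact Finset.mem_range.2 (ZMod.val_lt z)
  · intro a ha; exact ZMod.val_cast_of_lt (Finset.mem_range.1 ha)
  · intro z _; exact ZMod.natCast_rightInverse z
  · intro a _; rfl

private lemma step1 (p : ℕ) [NeZero p] (A : Matrix (Fin 2) (Fin 2) ℤ) (B : Fin 2 → ℤ) :
    (∑ x₁ ∈ Finset.range p, ∑ x₂ ∈ Finset.range p,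
          Complex.exp (2 * Real.pi * Complex.I *
            ((A 0 0 * (x₁ : ℤ) ^ 2 + (A 0 1 + A 1 0) * (x₁ : ℤ) * (x₂ : ℤ) +
                A 1 1 * (x₂ : ℤ) ^ 2 + 2 * (B 0 * (x₁ : ℤ) + B 1 * (x₂ : ℤ)) : ℤ) : ℂ) / (p : ℂ)))
      = Sp p A B := by
  calc (∑ x₁ ∈ Finset.range p, ∑ x₂ ∈ Finset.range p,
          Complex.exp (2 * Real.pi * Complex.I *
            ((A 0 0 * (x₁ : ℤ) ^ 2 + (A 0 1 + A 1 0) * (x₁ : ℤ) * (x₂ : ℤ) +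
                A 1 1 * (x₂ : ℤ) ^ 2 + 2 * (B 0 * (x₁ : ℤ) + B 1 * (x₂ : ℤ)) : ℤ) : ℂ) / (p : ℂ)))
      = ∑ x₁ ∈ Finset.range p, ∑ x₂ ∈ Finset.range p,
          ZMod.stdAddChar (Qp p A B (x₁ : ZMod p) (x₂ : ZMod p)) := by
        refine Finset.sum_congr rfl fun x₁ _ => Finset.sum_congr rfl fun x₂ _ => ?_
        rw [← ZMod.stdAddChar_coe]
        congr 1
        simp only [Qp]
        push_cast
        ring
  _ = ∑ x₁ ∈ Finset.range p, ∑ z₂ : ZMod p, ZMod.stdAddChar (Qp p A B (x₁ : ZMod p) z₂) :=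
        Finset.sum_congr rfl fun x₁ _ =>
          sum_range_castZMod (fun z₂ => ZMod.stdAddChar (Qp p A B (x₁ : ZMod p) z₂))
  _ = ∑ z₁ : ZMod p, ∑ z₂ : ZMod p, ZMod.stdAddChar (Qp p A B z₁ z₂) :=
        sum_range_castZMod (fun z₁ => ∑ z₂ : ZMod p, ZMod.stdAddChar (Qp p A B z₁ z₂))
  _ = Sp p A B := by
        rw [Sp, Fintype.sum_prod_type]

private lemma step3 (p : ℕ) [NeZero p] [Fact p.Prime] (A : Matrix (Fin 2) (Fin 2) ℤ)
    (r : ℕ) (hr : (A.map (Int.cast : ℤ → ZMod p)).rank = r) :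
    r ≤ 2 ∧
      Nat.card (LinearMap.ker (A.map (Int.cast : ℤ → ZMod p)).mulVecLin) = p ^ (2 - r) := by
  set M := A.map (Int.cast : ℤ → ZMod p) with hM
  have hrk : Module.finrank (ZMod p) (LinearMap.range M.mulVecLin) = r := hr
  have hsum : Module.finrank (ZMod p) (LinearMap.range M.mulVecLin) +
      Module.finrank (ZMod p) (LinearMap.ker M.mulVecLin) = 2 := by
    rw [LinearMap.finrank_range_add_finrank_ker]
    simp [Module.finrank_fin_fun]
  have hle : r ≤ 2 := by omega
  have hker : Module.finrank (ZMod p) (LinearMap.ker M.mulVecLin) = 2 - r := by omega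
  refine ⟨hle, ?_⟩
  letI : Fintype (LinearMap.ker M.mulVecLin) := Fintype.ofFinite _
  rw [Nat.card_eq_fintype_card, Module.card_eq_pow_finrank (K := ZMod p), hker, ZMod.card]

/-- bound for a two-dimensional quadratic Gauss sum mod an odd prime `p` in terms
of the rank `r` of the reduction mod `p` of the symmetric matrix `A`. -/
theorem stmt3 (p : ℕ) (hp : p.Prime) (hodd : p ≠ 2)
    (A : Matrix (Fin 2) (Fin 2) ℤ) (hA : A.IsSymm) (B : Fin 2 → ℤ) (r : ℕ)
    (hr : (A.map (Int.cast : ℤ → ZMod p)).rank = r) :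
    ‖(p : ℂ) ^ (-(2 : ℤ)) *
        ∑ x₁ ∈ Finset.range p, ∑ x₂ ∈ Finset.range p,
          Complex.exp (2 * Real.pi * Complex.I *
            ((A 0 0 * (x₁ : ℤ) ^ 2 + (A 0 1 + A 1 0) * (x₁ : ℤ) * (x₂ : ℤ) +
                A 1 1 * (x₂ : ℤ) ^ 2 + 2 * (B 0 * (x₁ : ℤ) + B 1 * (x₂ : ℤ)) : ℤ) : ℂ) / (p : ℂ))‖
      ≤ (p : ℝ) ^ (-(r : ℝ) / 2) := by
  haveI : Fact p.Prime := ⟨hp⟩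
  haveI : NeZero p := ⟨hp.pos.ne'⟩
  have pr : (0 : ℝ) < p := by exact_mod_cast hp.pos
  obtain ⟨hr2, hcard⟩ := step3 p A r hr
  have hb := step2 p A B hA hodd
  rw [hcard] at hb
  rw [step1 p A B]
  set x := ‖Sp p A B‖ with hx
  have hx0 : 0 ≤ x := norm_nonneg _
  have hbb : x ^ 2 ≤ (p : ℝ) ^ (4 - r) := by
    calc x ^ 2 ≤ (p:ℝ)^2 * (p:ℝ)^(2-r) := by exact_mod_cast hb
    _ = (p:ℝ) ^ (4 - r) := by
        rw [← pow_add]; congr 1; omega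
  have hxle : x ≤ (p : ℝ) ^ ((2 : ℝ) - (r : ℝ) / 2) := by
    have h1 : x = Real.sqrt (x ^ 2) := (Real.sqrt_sq hx0).symm
    rw [h1]
    calc Real.sqrt (x ^ 2) ≤ Real.sqrt ((p:ℝ) ^ (4 - r)) := Real.sqrt_le_sqrt hbb
    _ = ((p:ℝ) ^ (4 - r)) ^ ((1:ℝ)/2) := Real.sqrt_eq_rpow _
    _ = ((p:ℝ) ^ (((4 - r : ℕ)):ℝ)) ^ ((1:ℝ)/2) := by rw [Real.rpow_natCast]
    _ = (p:ℝ) ^ ((((4 - r : ℕ)):ℝ) * ((1:ℝ)/2)) := by rw [← Real.rpow_mul pr.le]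
    _ = (p : ℝ) ^ ((2 : ℝ) - (r : ℝ) / 2) := by
        congr 1
        rw [Nat.cast_sub (by omega)]
        push_cast; ring
  rw [norm_mul, norm_zpow, Complex.norm_natCast]
  calc (p:ℝ) ^ (-(2:ℤ)) * x ≤ (p:ℝ) ^ (-(2:ℤ)) * ((p:ℝ) ^ ((2 : ℝ) - (r : ℝ) / 2)) := by
        apply mul_le_mul_of_nonneg_left hxle
        positivity
  _ = (p : ℝ) ^ (-(r : ℝ) / 2) := by
        rw [show ((p:ℝ) ^ (-(2:ℤ))) = (p:ℝ) ^ ((-2 : ℝ)) by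
          rw [← Real.rpow_intCast]; norm_num]
        rw [← Real.rpow_add pr]; ring_nf
end

section
/- Let p be an odd prime and χ a primitive Dirichlet character mod p^n with n ≥ 3. If α is an integer with n/3 ≤ α < n/2, then there exists b_χ coprime to p such that χ(1 + z p^α) = e^{2πi·b_χ·(z p^α − z² p^{2α}·2^{-1})/p^n} for all z ∈ ℤ, where 2^{-1} is the inverse of 2 mod p^n. -/
open Complex

/-- quadratic truncation of the logarithm identity: for `p` an odd prime,
`χ` a primitive Dirichlet character mod `p^n` with `n ≥ 3`, and `n/3 ≤ α < n/2`
(i.e. `3α ≥ n` and `2α < n`), there exists `b_χ` coprime to `p` such that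
`χ(1 + z p^α) = e^{2πi b_χ (z p^α − z² p^{2α} 2^{-1})/p^n}` for all `z`,
where `2^{-1}` is the inverse of `2` mod `p^n`. -/
theorem stmt9 (p n α : ℕ) (hp : p.Prime) (hodd : p ≠ 2) (hn : 3 ≤ n)
    (χ : DirichletCharacter ℂ (p ^ n)) (hχ : χ.conductor = p ^ n)
    (hα₁ : n ≤ 3 * α) (hα₂ : 2 * α < n) :
    ∃ b : ℤ, ¬ (p : ℤ) ∣ b ∧
      ∀ z : ℤ, ∀ inv2 : ℤ, Int.ModEq ((p : ℤ) ^ n) (2 * inv2) 1 →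
        χ ((1 + z * (p : ℤ) ^ α : ℤ) : ZMod (p ^ n)) =
          Complex.exp (2 * Real.pi * Complex.I *
            ((b * (z * (p : ℤ) ^ α - z ^ 2 * (p : ℤ) ^ (2 * α) * inv2) : ℤ) : ℂ) /
              (p : ℂ) ^ n) := by
  haveI : Fact p.Prime := ⟨hp⟩
  have hp1 : 1 < p := hp.one_lt
  have hα1 : 1 ≤ α := by omega
  obtain ⟨δ, rfl⟩ : ∃ d, n = α + d + 1 := ⟨n - α - 1, by omega⟩
  have hαδ : α ≤ δ := by omega
  haveI : NeZero (p ^ (α + δ + 1)) := ⟨pow_ne_zero _ (by omega)⟩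
  have hpn1 : (p : ZMod (p ^ (α + δ + 1))) ^ (α + δ + 1) = 0 := by
    rw [← Nat.cast_pow, ZMod.natCast_self]
  obtain ⟨γ, hγ⟩ : ∃ g, 3 * α = (α + δ + 1) + g := ⟨3 * α - (α + δ + 1), by omega⟩
  have h3 : (p : ZMod (p ^ (α + δ + 1))) ^ (3 * α) = 0 := by
    have hkey : (p : ZMod (p ^ (α + δ + 1))) ^ (α + δ + 1 + γ) =
        (p : ZMod (p ^ (α + δ + 1))) ^ (α + δ + 1) * (p : ZMod (p ^ (α + δ + 1))) ^ γ :=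
      pow_add _ _ _
    rw [hγ, hkey, hpn1, zero_mul]
  obtain ⟨ρ, hρ⟩ : ∃ r, 2 * α + 2 * δ = (α + δ + 1) + r := ⟨α + δ - 1, by omega⟩
  have h2αδ : (p : ZMod (p ^ (α + δ + 1))) ^ (2 * α + 2 * δ) = 0 := by
    have hkey : (p : ZMod (p ^ (α + δ + 1))) ^ (α + δ + 1 + ρ) =
        (p : ZMod (p ^ (α + δ + 1))) ^ (α + δ + 1) * (p : ZMod (p ^ (α + δ + 1))) ^ ρ :=
      pow_add _ _ _
    rw [hρ, hkey, hpn1, zero_mul]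
  -- the inverse of 2
  have hcop2 : Nat.Coprime 2 (p ^ (α + δ + 1)) :=
    ((Nat.coprime_primes Nat.prime_two hp).mpr (Ne.symm hodd)).pow_right _
  have hu2 : IsUnit (2 : ZMod (p ^ (α + δ + 1))) := by
    have := (ZMod.isUnit_iff_coprime 2 (p ^ (α + δ + 1))).mpr hcop2
    simpa using this
  set i0 : ℤ := (((2 : ZMod (p ^ (α + δ + 1)))⁻¹).val : ℤ) with hi0def
  set I0 : ZMod (p ^ (α + δ + 1)) := ((i0 : ℤ) : ZMod (p ^ (α + δ + 1))) with hI0def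
  have h2R : 2 * I0 = 1 := by
    rw [hI0def, hi0def]
    push_cast
    rw [ZMod.natCast_val, ZMod.cast_id]
    exact ZMod.mul_inv_of_unit _ hu2
  -- the truncated exponential
  set E : ℤ → ZMod (p ^ (α + δ + 1)) :=
    fun z => ((1 + z * (p : ℤ) ^ α + z ^ 2 * (p : ℤ) ^ (2 * α) * i0 : ℤ) :
      ZMod (p ^ (α + δ + 1))) with hEdef
  have hE : ∀ z : ℤ, E z =
      1 + (z : ZMod (p ^ (α + δ + 1))) * (p : ZMod (p ^ (α + δ + 1))) ^ α
        + (z : ZMod (p ^ (α + δ + 1))) ^ 2 * (p : ZMod (p ^ (α + δ + 1))) ^ (2 * α) * I0 := by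
    intro z
    simp only [hEdef, hI0def]
    push_cast
    ring
  have hE0 : E 0 = 1 := by rw [hE]; push_cast; ring
  have hEhom : ∀ z w : ℤ, E (z + w) = E z * E w := by
    intro z w
    rw [hE, hE, hE]
    push_cast
    linear_combination
      ((z : ZMod (p ^ (α + δ + 1))) * (w : ZMod (p ^ (α + δ + 1))) *
        ((p : ZMod (p ^ (α + δ + 1))) ^ α) ^ 2) * h2R -
      (((z : ZMod (p ^ (α + δ + 1))) * (w : ZMod (p ^ (α + δ + 1))) ^ 2 +
          (z : ZMod (p ^ (α + δ + 1))) ^ 2 * (w : ZMod (p ^ (α + δ + 1)))) * I0 +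
        (z : ZMod (p ^ (α + δ + 1))) ^ 2 * (w : ZMod (p ^ (α + δ + 1))) ^ 2 *
          (p : ZMod (p ^ (α + δ + 1))) ^ α * I0 ^ 2) * h3
  set F : ℤ → ℂ := fun z => χ (E z) with hFdef
  have hF0 : F 0 = 1 := by simp only [hFdef]; rw [hE0]; exact map_one χ
  have hFhom : ∀ z w : ℤ, F (z + w) = F z * F w := by
    intro z w
    simp only [hFdef, hEhom, map_mul]
  set ζ : ℂ := F 1 with hζdef
  have hFnat : ∀ k : ℕ, F k = ζ ^ k := by
    intro k
    induction k with
    | zero => simpa using hF0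
    | succ m ih =>
      have h : ((m + 1 : ℕ) : ℤ) = (m : ℤ) + 1 := by push_cast; ring
      rw [h, hFhom, ih, pow_succ]
  have hEtop : E ((p : ℤ) ^ (δ + 1)) = 1 := by
    rw [hE]
    push_cast
    linear_combination (1 + (p : ZMod (p ^ (α + δ + 1))) ^ (α + δ + 1) * I0) * hpn1
  have hζpow : ζ ^ (p ^ (δ + 1)) = 1 := by
    have h := hFnat (p ^ (δ + 1))
    rw [show ((p ^ (δ + 1) : ℕ) : ℤ) = (p : ℤ) ^ (δ + 1) by push_cast; ring] at h
    rw [← h]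
    simp only [hFdef]
    rw [hEtop]
    exact map_one χ
  haveI : NeZero (p ^ (δ + 1)) := ⟨pow_ne_zero _ (by omega)⟩
  obtain ⟨c, hclt, hc⟩ :=
    (Complex.isPrimitiveRoot_exp (p ^ (δ + 1))
      (pow_ne_zero _ (by omega))).eq_pow_of_pow_eq_one hζpow
  have hpC : (p : ℂ) ≠ 0 := Nat.cast_ne_zero.mpr (by omega)
  have hpd1 : ((p : ℂ)) ^ (δ + 1) ≠ 0 := pow_ne_zero _ hpC
  have hpnC : ((p : ℂ)) ^ (α + δ + 1) ≠ 0 := pow_ne_zero _ hpC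
  have hζval : ζ = Complex.exp (2 * Real.pi * Complex.I * c / (p : ℂ) ^ (δ + 1)) := by
    rw [← hc, ← Complex.exp_nat_mul]
    congr 1
    push_cast
    field_simp
  have hFint : ∀ z : ℤ, F z =
      Complex.exp (2 * Real.pi * Complex.I * (c * z) / (p : ℂ) ^ (δ + 1)) := by
    have hFN : ∀ k : ℕ, F k =
        Complex.exp (2 * Real.pi * Complex.I * (c * k) / (p : ℂ) ^ (δ + 1)) := by
      intro k
      rw [hFnat, hζval, ← Complex.exp_nat_mul]
      congr 1
      field_simp
    intro z
    obtain ⟨k, rfl | rfl⟩ := z.eq_nat_or_neg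
    · exact hFN k
    · have h1 : F (-(k : ℤ)) * F k = 1 := by
        rw [← hFhom]; simpa using hF0
      have h2 : F (-(k : ℤ)) = (F k)⁻¹ := eq_inv_of_mul_eq_one_left h1
      rw [h2, hFN, ← Complex.exp_neg]
      congr 1
      push_cast
      field_simp
  -- the key evaluation formula
  have hkey : ∀ z : ℤ, χ ((1 + z * (p : ℤ) ^ α : ℤ) : ZMod (p ^ (α + δ + 1))) =
      Complex.exp (2 * Real.pi * Complex.I *
        ((c : ℂ) * ((z : ℂ) * (p : ℂ) ^ α - (z : ℂ) ^ 2 * (p : ℂ) ^ (2 * α) * (i0 : ℂ))) /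
          (p : ℂ) ^ (α + δ + 1)) := by
    intro z
    have hcast : ((1 + z * (p : ℤ) ^ α : ℤ) : ZMod (p ^ (α + δ + 1))) =
        E (z - z ^ 2 * (p : ℤ) ^ α * i0) := by
      rw [hE]
      push_cast
      linear_combination (2 * (z : ZMod (p ^ (α + δ + 1))) ^ 3 * I0 ^ 2 -
        (z : ZMod (p ^ (α + δ + 1))) ^ 4 * (p : ZMod (p ^ (α + δ + 1))) ^ α * I0 ^ 3) * h3
    rw [hcast]
    have h := hFint (z - z ^ 2 * (p : ℤ) ^ α * i0)
    simp only [hFdef] at h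
    rw [h]
    congr 1
    push_cast
    field_simp
    ring
  refine ⟨(c : ℤ), ?_, ?_⟩
  · -- coprimality via the conductor
    intro hdvd
    obtain ⟨c', hc'⟩ := hdvd
    have hd : p ^ (α + δ) ∣ p ^ (α + δ + 1) := pow_dvd_pow p (by omega)
    have hfact : χ.FactorsThrough (p ^ (α + δ)) := by
      rw [DirichletCharacter.factorsThrough_iff_ker_unitsMap hd]
      intro u hu
      set x : ℤ := (((u : ZMod (p ^ (α + δ + 1))).val : ℕ) : ℤ) with hxdef
      have hx : ((x : ℤ) : ZMod (p ^ (α + δ + 1))) = (u : ZMod (p ^ (α + δ + 1))) := by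
        rw [hxdef]; push_cast; rw [ZMod.natCast_val, ZMod.cast_id]
      have hcast1 : ((x : ℤ) : ZMod (p ^ (α + δ))) = 1 := by
        have h1 : (ZMod.castHom hd (ZMod (p ^ (α + δ)))) ((x : ℤ) : ZMod (p ^ (α + δ + 1))) =
            ((x : ℤ) : ZMod (p ^ (α + δ))) := map_intCast _ _
        rw [← h1, hx]
        have h2 : ((ZMod.unitsMap hd u : (ZMod (p ^ (α + δ)))ˣ) : ZMod (p ^ (α + δ))) =
            (ZMod.castHom hd (ZMod (p ^ (α + δ)))) (u : ZMod (p ^ (α + δ + 1))) := rfl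
        rw [← h2, hu, Units.val_one]
      have hmod : x ≡ 1 [ZMOD (p ^ (α + δ) : ℕ)] := by
        rwa [← ZMod.intCast_eq_intCast_iff, Int.cast_one]
      obtain ⟨t, ht⟩ : ∃ t : ℤ, x = 1 + t * (p : ℤ) ^ (α + δ) := by
        obtain ⟨t, ht⟩ := Int.ModEq.dvd hmod
        refine ⟨-t, ?_⟩
        push_cast at ht ⊢
        linarith
      rw [MonoidHom.mem_ker]
      ext
      rw [MulChar.coe_toUnitHom, Units.val_one, ← hx, ht]
      have hcE : ((1 + t * (p : ℤ) ^ (α + δ) : ℤ) : ZMod (p ^ (α + δ + 1))) =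
          E (t * (p : ℤ) ^ δ) := by
        rw [hE]
        push_cast
        linear_combination (-((t : ZMod (p ^ (α + δ + 1))) ^ 2) * I0) * h2αδ
      rw [hcE]
      have h := hFint (t * (p : ℤ) ^ δ)
      simp only [hFdef] at h
      rw [h]
      rw [show 2 * (Real.pi : ℂ) * Complex.I * ((c : ℂ) * ((t * (p : ℤ) ^ δ : ℤ) : ℂ)) /
            (p : ℂ) ^ (δ + 1) = ((c' * t : ℤ) : ℂ) * (2 * (Real.pi : ℂ) * Complex.I) by
        have hcC : (c : ℂ) = (p : ℂ) * (c' : ℂ) := by exact_mod_cast congrArg (Int.cast : ℤ → ℂ) hc'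
        push_cast [hcC]
        field_simp
        ring]
      exact Complex.exp_int_mul_two_pi_mul_I _
    have hle : χ.conductor ≤ p ^ (α + δ) := Nat.sInf_le hfact
    rw [hχ] at hle
    have hlt : p ^ (α + δ) < p ^ (α + δ + 1) := Nat.pow_lt_pow_right hp1 (by omega)
    omega
  · intro z inv2 hinv2
    have h2int : (2 * i0) ≡ 1 [ZMOD ((p : ℤ) ^ (α + δ + 1))] := by
      have h : ((2 * i0 : ℤ) : ZMod (p ^ (α + δ + 1))) = ((1 : ℤ) : ZMod (p ^ (α + δ + 1))) := by
        push_cast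
        rw [← hI0def]
        exact h2R
      rw [ZMod.intCast_eq_intCast_iff] at h
      rwa [Nat.cast_pow] at h
    have hdvd2 : ((p : ℤ) ^ (α + δ + 1)) ∣ 2 * (inv2 - i0) := by
      have h := (hinv2.trans h2int.symm).dvd
      have h2 : (2 : ℤ) * (inv2 - i0) = -(2 * i0 - 2 * inv2) := by ring
      rw [h2]
      exact dvd_neg.mpr h
    have hco : IsCoprime ((p : ℤ) ^ (α + δ + 1)) (2 : ℤ) := by
      have := (Nat.isCoprime_iff_coprime (m := p ^ (α + δ + 1)) (n := 2)).mpr hcop2.symm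
      push_cast at this
      exact this
    obtain ⟨t, ht⟩ : ((p : ℤ) ^ (α + δ + 1)) ∣ (inv2 - i0) := hco.dvd_of_dvd_mul_left hdvd2
    rw [hkey z]
    have harg : 2 * (Real.pi : ℂ) * Complex.I *
          (((c : ℤ) * (z * (p : ℤ) ^ α - z ^ 2 * (p : ℤ) ^ (2 * α) * inv2) : ℤ) : ℂ) /
            (p : ℂ) ^ (α + δ + 1) =
        2 * Real.pi * Complex.I *
          ((c : ℂ) * ((z : ℂ) * (p : ℂ) ^ α - (z : ℂ) ^ 2 * (p : ℂ) ^ (2 * α) * (i0 : ℂ))) /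
            (p : ℂ) ^ (α + δ + 1) +
          ((-(c * z ^ 2 * (p : ℤ) ^ (2 * α) * t) : ℤ) : ℂ) * (2 * Real.pi * Complex.I) := by
      have hinv2eq : inv2 = i0 + (p : ℤ) ^ (α + δ + 1) * t := by linarith
      rw [hinv2eq]
      push_cast
      field_simp
      ring
    rw [harg, Complex.exp_add, Complex.exp_int_mul_two_pi_mul_I, mul_one]
end
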